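/- Every projection in the unitization of C₀(𝔸) is trivial: if f : 𝔸 → ℝ is continuous, takes values in {0, 1}, and converges along the cocompact filter of 𝔸 (i.e., there is λ ∈ ℝ such that for every ε > 0 there is a compact K ⊆ 𝔸 with |f(x) − λ| < ε for all x ∉ K), then f is constant (identically 0 or identically 1). -/

import Mathlib

open Filter IsDedekindDomain

noncomputable section

/-- The finite adele ring `𝔸_f` of `ℚ`: the restricted product of the fields `ℚ_p` with
respect to the subrings `ℤ_p`, with the restricted product topology. -/
abbrev FiniteAdeles : Type := FiniteAdeleRing ℤ ℚ

/-- The adele ring `𝔸 = ℝ × 𝔸_f` of `ℚ`. -/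
abbrev AdeleRingQ : Type := ℝ × FiniteAdeles

/-- The diagonal embedding `ι : ℚ → 𝔸`, `q ↦ (q, (q)_p)`. -/
def diag (q : ℚ) : AdeleRingQ := ((q : ℝ), algebraMap ℚ FiniteAdeles q)

/-- A function on the adele ring is `ℚ`-periodic if it is invariant under translation by
every diagonally embedded rational. -/
def QPeriodic {β : Type*} (g : AdeleRingQ → β) : Prop :=
  ∀ (x : AdeleRingQ) (α : ℚ), g (x + diag α) = g x

/-- A continuous function `f : ℝ → ℂ` taking values in the unit circle `S¹` is *pre-periodic*
if for every `ε > 0` there is a positive integer `N` such that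
`|f (x + k * N) - f x| < ε` for all integers `k` and all real `x`. -/
def PrePeriodic (f : ℝ → ℂ) : Prop :=
  Continuous f ∧ (∀ x : ℝ, ‖f x‖ = 1) ∧
    ∀ ε : ℝ, 0 < ε → ∃ N : ℕ, 0 < N ∧
      ∀ (k : ℤ) (x : ℝ), ‖f (x + (k : ℝ) * (N : ℝ)) - f x‖ < ε

/-- `F : ℝ → ℝ` is a lift of `f : ℝ → S¹ ⊆ ℂ` if `F` is continuous and
`f x = e^{2 π i F x}` for all `x`. -/
def IsLift (f : ℝ → ℂ) (F : ℝ → ℝ) : Prop :=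
  Continuous F ∧ ∀ x : ℝ, f x = Complex.exp (2 * Real.pi * Complex.I * (F x : ℂ))

/-!
On each line `ℝ × {a}` of `𝔸 = ℝ × 𝔸_f` the function `f` is constant, since `ℝ` is connected and
`f` takes values in the discrete set `{0, 1}`. The map `t ↦ (t, a)` pulls every compact `K ⊆ 𝔸`
back into the compact projection of `K` to `ℝ`, and `ℝ` is not compact, so the line leaves every
compact set; hence the constant value of `f` on it is the limit `λ`. Thus `f ≡ λ`.
-/

open Set

section ProductLines

variable {X Y β : Type*} [TopologicalSpace X] [TopologicalSpace Y]

theorem tendsto_prodMk_const_cocompact (y : Y) :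
    Tendsto (fun x : X => (x, y)) (cocompact X) (cocompact (X × Y)) := by
  rw [← coprod_cocompact]
  refine Tendsto.mono_right ?_ le_sup_left
  exact tendsto_comap_iff.2 tendsto_id

theorem Continuous.eq_of_tendsto_cocompact_of_mapsTo_isDiscrete [PreconnectedSpace X]
    [NoncompactSpace X] [TopologicalSpace β] [T1Space β] {T : Set β} (hT : IsDiscrete T)
    {f : X × Y → β} (hc : Continuous f) (hfT : ∀ z, f z ∈ T) {b : β}
    (hf : Tendsto f (cocompact (X × Y)) (nhds b)) (z : X × Y) : f z = b := by
  have hline : (fun x : X => f (x, z.2)) = fun _ => f z := funext fun x =>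
    isPreconnected_univ.constant_of_mapsTo hT (hc.comp (.prodMk_left z.2)).continuousOn
      (fun x _ => hfT (x, z.2)) (mem_univ x) (mem_univ z.1)
  have hlim := hf.comp (tendsto_prodMk_const_cocompact (X := X) z.2)
  rwa [Function.comp_def, hline, tendsto_const_nhds_iff] at hlim

end ProductLines

/-- Every projection in the unitization of `C₀(𝔸)` is trivial: a continuous function
`f : 𝔸 → ℝ` with values in `{0, 1}` that converges along the cocompact filter of `𝔸`
is constant. -/
theorem unitization_projections_trivial (f : AdeleRingQ → ℝ) (lam : ℝ)
    (hc : Continuous f) (hv : ∀ x : AdeleRingQ, f x = 0 ∨ f x = 1)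
    (hconv : Tendsto f (cocompact AdeleRingQ) (nhds lam)) :
    (∀ x : AdeleRingQ, f x = 0) ∨ (∀ x : AdeleRingQ, f x = 1) := by
  have hdiscrete : IsDiscrete ({0, 1} : Set ℝ) := (toFinite _).isDiscrete
  have hconst : ∀ x, f x = lam :=
    hc.eq_of_tendsto_cocompact_of_mapsTo_isDiscrete hdiscrete hv hconv
  simp only [hconst] at hv ⊢
  exact (hv 0).imp (fun h _ => h) (fun h _ => h)
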